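/- In the polynomial ring P_n, the identity ∂_m ∂_{m-1} ⋯ ∂_{m-r}(x_{m-r}^{r+1} x_{m-r+1}^{r} ⋯ x_m^1) = (−1)^{r+1} x_{m-r}^{r} x_{m-r+1}^{r-1} ⋯ x_{m-1}^1 holds for 1 ≤ m−r ≤ m < n, where ∂_i are Demazure operators. -/

import Mathlib

open MvPolynomial

/-- `IsDemazure D` says that `D i` is the Demazure operator `∂_{i+1}` (so `D i` involves the
variables of indices `i` and `i+1`, i.e. `x_{i+1}` and `x_{i+2}` in one-based notation),
characterized by `D i P * (x_{i+2} - x_{i+1}) = P - s_{i+1}(P)`. -/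
def IsDemazure {K : Type} [Field K] {n : ℕ}
    (D : Fin (n - 1) → MvPolynomial (Fin n) K → MvPolynomial (Fin n) K) : Prop :=
  ∀ (i : Fin (n - 1)) (P : MvPolynomial (Fin n) K),
    D i P * (X (⟨i.val + 1, by have := i.isLt; omega⟩ : Fin n) -
        X (⟨i.val, by have := i.isLt; omega⟩ : Fin n)) =
      P - rename (Equiv.swap (⟨i.val, by have := i.isLt; omega⟩ : Fin n)
        (⟨i.val + 1, by have := i.isLt; omega⟩ : Fin n)) P

/-!
Write `S_{a,k,e} = ∏_{t<k} x_{a+t}^{e-t}` (`stair a k e`). Since `∂_j` is linear over `s_j`-invariant polynomials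
and `∂_j (x_j) = -1`, we get `∂_j (x_j^{e+1} x_{j+1}^e) = -(x_j x_{j+1})^e`. Hence the first
operator turns `S_{a,r+1,r+1}` into `-x_a^r S_{a+1,r,r}`; the factor `-x_a^r` is invariant under all
later transpositions, so it passes through the remaining operators and induction on `r` concludes.
-/

section Demazure

variable {K : Type} [Field K] {n : ℕ}

/- Variables and operators are indexed by `ℕ` (zero-based) so that shifting an index needs no bound
proof; out of range they are junk (`0` and the identity), and the lemmas assume the indices in range. -/

noncomputable def natX (j : ℕ) : MvPolynomial (Fin n) K :=
  if h : j < n then X ⟨j, h⟩ else 0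

def adjSwap (j : ℕ) (hj : j + 1 < n) : Equiv.Perm (Fin n) :=
  Equiv.swap ⟨j, by omega⟩ ⟨j + 1, hj⟩

def natD (D : Fin (n - 1) → MvPolynomial (Fin n) K → MvPolynomial (Fin n) K) (j : ℕ)
    (P : MvPolynomial (Fin n) K) : MvPolynomial (Fin n) K :=
  if h : j < n - 1 then D ⟨j, h⟩ P else P

noncomputable def stair (a k e : ℕ) : MvPolynomial (Fin n) K :=
  ∏ t ∈ Finset.range k, natX (a + t) ^ (e - t)

lemma natX_of_lt {j : ℕ} (h : j < n) : (natX j : MvPolynomial (Fin n) K) = X ⟨j, h⟩ :=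
  dif_pos h

lemma natX_succ_sub_natX_ne_zero {j : ℕ} (hj : j + 1 < n) :
    (natX (j + 1) - natX j : MvPolynomial (Fin n) K) ≠ 0 := by
  rw [natX_of_lt hj, natX_of_lt (by omega), sub_ne_zero, Ne, X_inj]
  simp

lemma rename_adjSwap_natX_self {j : ℕ} (hj : j + 1 < n) :
    rename (adjSwap j hj) (natX j : MvPolynomial (Fin n) K) = natX (j + 1) := by
  rw [natX_of_lt (by omega), natX_of_lt hj, rename_X, adjSwap, Equiv.swap_apply_left]

lemma rename_adjSwap_natX_succ {j : ℕ} (hj : j + 1 < n) :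
    rename (adjSwap j hj) (natX (j + 1) : MvPolynomial (Fin n) K) = natX j := by
  rw [natX_of_lt hj, natX_of_lt (by omega), rename_X, adjSwap, Equiv.swap_apply_right]

lemma rename_adjSwap_natX_of_ne {j k : ℕ} (hj : j + 1 < n) (hkj : k ≠ j) (hkj' : k ≠ j + 1) :
    rename (adjSwap j hj) (natX k : MvPolynomial (Fin n) K) = natX k := by
  by_cases hk : k < n
  · rw [natX_of_lt hk, rename_X, adjSwap, Equiv.swap_apply_of_ne_of_ne] <;> simp [Fin.ext_iff, *]
  · simp [natX, hk]

lemma rename_adjSwap_stair {j : ℕ} (hj : j + 1 < n) {a : ℕ} (ha : j + 1 < a) (k e : ℕ) :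
    rename (adjSwap j hj) (stair a k e : MvPolynomial (Fin n) K) = stair a k e := by
  rw [stair, map_prod]
  refine Finset.prod_congr rfl fun t _ => ?_
  rw [map_pow, rename_adjSwap_natX_of_ne hj (by omega) (by omega)]

lemma stair_succ (a k e : ℕ) :
    (stair a (k + 1) (e + 1) : MvPolynomial (Fin n) K) = natX a ^ (e + 1) * stair (a + 1) k e := by
  rw [stair, Finset.prod_range_succ', mul_comm, stair]
  congr 1
  refine Finset.prod_congr rfl fun t _ => ?_
  rw [show a + (t + 1) = a + 1 + t by omega, Nat.add_sub_add_right]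

lemma prod_X_eq_stair (a k e : ℕ) (h : a + k ≤ n) :
    ∏ t : Fin k, (X ⟨a + t.val, by have := t.isLt; omega⟩ : MvPolynomial (Fin n) K) ^ (e - t.val)
      = stair a k e :=
  (Finset.prod_congr rfl fun t _ => by rw [natX_of_lt]).trans
    (Fin.prod_univ_eq_prod_range (fun t => natX (a + t) ^ (e - t)) k)

lemma foldl_finRange_eq_foldl_range'
    (D : Fin (n - 1) → MvPolynomial (Fin n) K → MvPolynomial (Fin n) K) (a k : ℕ)
    (h : a + k ≤ n - 1) (P : MvPolynomial (Fin n) K) :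
    (List.finRange k).foldl (fun P t => D ⟨a + t.val, by have := t.isLt; omega⟩ P) P =
      (List.range' a k).foldl (fun P j => natD D j P) P := by
  rw [List.range'_eq_map_range, ← List.map_coe_finRange_eq_range, List.map_map, List.foldl_map]
  congr
  funext P t
  simp only [Function.comp_apply, natD, dif_pos (show a + t.val < n - 1 by have := t.isLt; omega)]

namespace IsDemazure

variable {D : Fin (n - 1) → MvPolynomial (Fin n) K → MvPolynomial (Fin n) K}

lemma natD_mul_sub (hD : IsDemazure D) {j : ℕ} (hj : j + 1 < n) (P : MvPolynomial (Fin n) K) :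
    natD D j P * (natX (j + 1) - natX j) = P - rename (adjSwap j hj) P := by
  rw [natD, dif_pos (by omega), natX_of_lt hj, natX_of_lt (by omega)]
  exact hD ⟨j, by omega⟩ P

lemma natD_eq_of_mul_sub (hD : IsDemazure D) {j : ℕ} (hj : j + 1 < n)
    {P Q : MvPolynomial (Fin n) K} (h : Q * (natX (j + 1) - natX j) = P - rename (adjSwap j hj) P) :
    natD D j P = Q :=
  mul_right_cancel₀ (natX_succ_sub_natX_ne_zero hj) ((hD.natD_mul_sub hj P).trans h.symm)

lemma natD_mul_of_rename_eq (hD : IsDemazure D) {j : ℕ} {c : MvPolynomial (Fin n) K}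
    (hc : ∀ hj : j + 1 < n, rename (adjSwap j hj) c = c) (P : MvPolynomial (Fin n) K) :
    natD D j (c * P) = c * natD D j P := by
  by_cases hj : j + 1 < n
  · refine hD.natD_eq_of_mul_sub hj ?_
    rw [map_mul, hc hj, mul_assoc, hD.natD_mul_sub hj, mul_sub]
  · simp only [natD, dif_neg (show ¬j < n - 1 by omega)]

lemma natD_natX (hD : IsDemazure D) {j : ℕ} (hj : j + 1 < n) :
    natD D j (natX j : MvPolynomial (Fin n) K) = -1 :=
  hD.natD_eq_of_mul_sub hj (by rw [rename_adjSwap_natX_self]; ring)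

lemma natD_natX_pow (hD : IsDemazure D) {j : ℕ} (hj : j + 1 < n) (e : ℕ) :
    natD D j (natX j ^ (e + 1) * natX (j + 1) ^ e : MvPolynomial (Fin n) K) =
      -(natX j * natX (j + 1)) ^ e := by
  have hsymm : rename (adjSwap j hj) ((natX j * natX (j + 1)) ^ e : MvPolynomial (Fin n) K) =
      (natX j * natX (j + 1)) ^ e := by
    rw [map_pow, map_mul, rename_adjSwap_natX_self, rename_adjSwap_natX_succ, mul_comm]
  rw [show (natX j ^ (e + 1) * natX (j + 1) ^ e : MvPolynomial (Fin n) K) =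
      (natX j * natX (j + 1)) ^ e * natX j by ring,
    hD.natD_mul_of_rename_eq (fun _ => hsymm), hD.natD_natX hj, mul_neg_one]

lemma foldl_natD_mul_of_rename_eq (hD : IsDemazure D) {c : MvPolynomial (Fin n) K} {a : ℕ}
    (hc : ∀ j, a ≤ j → ∀ hj : j + 1 < n, rename (adjSwap j hj) c = c) (k : ℕ)
    (P : MvPolynomial (Fin n) K) :
    (List.range' a k).foldl (fun P j => natD D j P) (c * P) =
      c * (List.range' a k).foldl (fun P j => natD D j P) P := by
  induction k generalizing a P with
  | zero => rfl
  | succ k ih =>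
    rw [List.range'_succ, List.foldl_cons, List.foldl_cons,
      hD.natD_mul_of_rename_eq (hc a le_rfl), ih fun j hj => hc j (by omega)]

lemma foldl_natD_stair (hD : IsDemazure D) (r a : ℕ) (h : a + r + 1 < n) :
    (List.range' a (r + 1)).foldl (fun P j => natD D j P) (stair a (r + 1) (r + 1)) =
      (-1) ^ (r + 1) * stair a (r + 1) r := by
  induction r generalizing a with
  | zero =>
    simp [stair, hD.natD_natX (j := a) (by omega)]
  | succ r ih =>
    have hfirst : natD D a (stair a (r + 1 + 1) (r + 1 + 1)) =
        -natX a ^ (r + 1) * stair (a + 1) (r + 1) (r + 1) := by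
      rw [stair_succ, stair_succ,
        show natX a ^ (r + 1 + 1) * (natX (a + 1) ^ (r + 1) * stair (a + 1 + 1) r r) =
          stair (a + 1 + 1) r r * (natX a ^ (r + 1 + 1) * natX (a + 1) ^ (r + 1)) by ring,
        hD.natD_mul_of_rename_eq (fun hj => rename_adjSwap_stair hj (by omega) r r),
        hD.natD_natX_pow (by omega)]
      ring
    have hsymm (j : ℕ) (hja : a + 1 ≤ j) (hj : j + 1 < n) :
        rename (adjSwap j hj) (-natX a ^ (r + 1) : MvPolynomial (Fin n) K) = -natX a ^ (r + 1) := by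
      rw [map_neg, map_pow, rename_adjSwap_natX_of_ne hj (by omega) (by omega)]
    rw [List.range'_succ, List.foldl_cons, hfirst, hD.foldl_natD_mul_of_rename_eq hsymm,
      ih (a + 1) (by omega), stair_succ a (r + 1) r]
    ring

end IsDemazure

end Demazure

/-- For `1 ≤ m − r ≤ m < n` (one-based indexing of the variables
`x_1, …, x_n`), `∂_m ∂_{m-1} ⋯ ∂_{m-r}(x_{m-r}^{r+1} x_{m-r+1}^r ⋯ x_m^1)
 = (−1)^{r+1} x_{m-r}^r x_{m-r+1}^{r-1} ⋯ x_{m-1}^1`, where the fold applies `∂_{m-r}`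
first, then `∂_{m-r+1}`, …, finally `∂_m`. -/
theorem demazure_staircase_shift {K : Type} [Field K] (n m r : ℕ)
    (h1 : 1 ≤ m - r) (h3 : m < n)
    (D : Fin (n - 1) → MvPolynomial (Fin n) K → MvPolynomial (Fin n) K)
    (hD : IsDemazure D) :
    (List.finRange (r + 1)).foldl
      (fun P t => D (⟨m - r - 1 + t.val, by have := t.isLt; omega⟩ : Fin (n - 1)) P)
      (∏ t : Fin (r + 1),
        (X (⟨m - r - 1 + t.val, by have := t.isLt; omega⟩ : Fin n) : MvPolynomial (Fin n) K)
          ^ (r + 1 - t.val)) =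
    (-1 : MvPolynomial (Fin n) K) ^ (r + 1) *
      ∏ t : Fin (r + 1),
        (X (⟨m - r - 1 + t.val, by have := t.isLt; omega⟩ : Fin n) : MvPolynomial (Fin n) K)
          ^ (r - t.val) := by
  rw [prod_X_eq_stair _ _ _ (by omega), prod_X_eq_stair _ _ _ (by omega),
    foldl_finRange_eq_foldl_range' D _ _ (by omega)]
  exact hD.foldl_natD_stair r (m - r - 1) (by omega)
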